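/- Let A be a unital associative F-algebra (char F = 0) with L, T ∈ A, [T, L] = L. Define u_a = Σ_{i≥0} ((−1)^i/i!) T_{−a}^[i] L^i t^i in A[[t]]. Then L · u_a = u_{a+1} · L for all a ∈ F. -/

import Mathlib

/-- Falling factorial `T_a^[k] = (T+a)(T+a−1)⋯(T+a−k+1)` in an `F`-algebra. -/
noncomputable def fall {F A : Type*} [Field F] [Ring A] [Algebra F A]
    (x : A) (a : F) : ℕ → A
  | 0 => 1
  | n + 1 => fall x a n * (x + algebraMap F A (a - n))

lemma L_mul_fall {F A : Type*} [Field F] [Ring A] [Algebra F A]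
    (T L : A) (h : T * L - L * T = L) (b : F) :
    ∀ i, L * fall T b i = fall T (b - 1) i * L := by
  intro i
  induction i with
  | zero => simp [fall]
  | succ n ih =>
    have hLT : L * T = T * L - L := by
      have h' : T * L = L + L * T := by rw [← sub_eq_iff_eq_add]; exact h
      rw [h']; abel
    have hc : L * algebraMap F A (b - n) = algebraMap F A (b - n) * L :=
      (Algebra.commutes _ _).symm
    simp only [fall]
    rw [← mul_assoc, ih, mul_assoc, mul_add, hLT, hc]
    have : b - 1 - n = b - n - 1 := by ring
    rw [this, mul_assoc]
    congr 1
    simp only [map_sub, map_one]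
    noncomm_ring

theorem L_mul_u {F A : Type*} [Field F] [CharZero F] [Ring A] [Algebra F A]
    (T L : A) (h : T * L - L * T = L) (a : F) :
    letI u : F → PowerSeries A := fun c =>
      PowerSeries.mk fun i => (((-1 : F) ^ i) / i.factorial) • (fall T (-c) i * L ^ i)
    PowerSeries.C L * u a = u (a + 1) * PowerSeries.C L := by
  ext n
  simp only [PowerSeries.coeff_C_mul, PowerSeries.coeff_mul_C, PowerSeries.coeff_mk,
    mul_smul_comm, smul_mul_assoc]
  congr 1
  have key : L * fall T (-a) n = fall T (-(a + 1)) n * L := by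
    have := L_mul_fall T L h (-a) n
    rw [this]
    congr 2
    ring
  calc L * (fall T (-a) n * L ^ n) = (L * fall T (-a) n) * L ^ n := by rw [mul_assoc]
    _ = fall T (-(a + 1)) n * L * L ^ n := by rw [key]
    _ = fall T (-(a + 1)) n * L ^ n * L := by
        rw [mul_assoc, mul_assoc, ← pow_succ, ← pow_succ']
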